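/- arXiv:alg-geom/9710011 — 2 statements merged into one kernel-verified Lean document; each statement's English description precedes it below -/
import Mathlib

section
/- Let k be a field, let f₁,…,f_m ∈ k[x₁,…,xₙ], let L = k[x₁,…,xₙ][t, t⁻¹] (the localization of k[x₁,…,xₙ,t] at the powers of t), and let R ⊆ L be the k[x₁,…,xₙ,t]-subalgebra of L generated by f₁/t, …, f_m/t. For each a = (a₁,…,aₙ) ∈ kⁿ, let σ_a be the k[t,t⁻¹]-algebra automorphism of L determined by σ_a(xᵢ) = xᵢ + t·aᵢ. Then: (1) σ_a(R) = R for every a ∈ kⁿ, and (2) σ_a ∘ σ_b = σ_{a+b} for all a, b ∈ kⁿ; that is, the additive group kⁿ acts on R by k[t]-algebra automorphisms. -/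
set_option synthInstance.maxHeartbeats 1000000
set_option maxHeartbeats 1000000

open Polynomial MvPolynomial

/-- The Laurent polynomial ring `L = k[x₁,…,xₙ][t,t⁻¹]`, realized as the localization of
`k[x₁,…,xₙ][t]` away from `t`. -/
abbrev DefToNormalCone.L (k : Type) [Field k] (n : ℕ) : Type :=
  Localization.Away (Polynomial.X : Polynomial (MvPolynomial (Fin n) k))

namespace DefToNormalCone

variable (k : Type) [Field k] (n : ℕ)

/-- The image of `t` in `L`. -/
noncomputable def t : L k n :=
  algebraMap (Polynomial (MvPolynomial (Fin n) k)) (L k n) Polynomial.X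

/-- The image of the variable `xᵢ` in `L`. -/
noncomputable def x (i : Fin n) : L k n :=
  algebraMap (Polynomial (MvPolynomial (Fin n) k)) (L k n)
    (Polynomial.C (MvPolynomial.X i))

/-- The element `fⱼ/t = fⱼ·t⁻¹` of `L`. -/
noncomputable def fDivT (f : MvPolynomial (Fin n) k) : L k n :=
  algebraMap (Polynomial (MvPolynomial (Fin n) k)) (L k n) (Polynomial.C f) *
    IsLocalization.Away.invSelf (S := L k n)
      (Polynomial.X : Polynomial (MvPolynomial (Fin n) k))

/-- The `k[x₁,…,xₙ,t]`-subalgebra `R = k[x₁,…,xₙ,t][f₁/t,…,f_m/t]` of `L`. -/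
noncomputable def R (m : ℕ) (f : Fin m → MvPolynomial (Fin n) k) :
    Subalgebra (Polynomial (MvPolynomial (Fin n) k)) (L k n) :=
  Algebra.adjoin _ {y : L k n | ∃ j : Fin m, y = fDivT k n (f j)}

/-- `σ` is "the" automorphism `σ_a` of `L`: a `k[t,t⁻¹]`-algebra automorphism of `L`
(i.e. a `k`-algebra automorphism fixing `t`, hence also `t⁻¹`) with `σ(xᵢ) = xᵢ + t·aᵢ`. -/
def IsSigma (a : Fin n → k) (σ : L k n ≃ₐ[k] L k n) : Prop :=
  σ (t k n) = t k n ∧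
    ∀ i : Fin n, σ (x k n i) = x k n i + t k n * algebraMap k (L k n) (a i)

end DefToNormalCone

/-! `σ_a` is the extension to `L` of the substitution `xᵢ ↦ xᵢ + aᵢ t` of `k[x][t]`, which fixes
`t`. Any `σ` with the prescribed values on `t` and the `xᵢ` agrees with it on `k[x][t]`, hence on
the localization `L`; this gives uniqueness, and the group law follows by checking `σ_a ∘ σ_b` on
`t` and the `xᵢ`. The substitution does not change the constant term in `t`, so `σ_a f ≡ f` mod `t`
for `f ∈ k[x]`, whence `σ_a (f/t) ∈ f/t + k[x,t] ⊆ R`. Thus `σ_a R ⊆ R`, and applying this to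
`σ_a⁻¹ = σ_{-a}` gives equality. -/

namespace DefToNormalCone

section Shift

variable {k ι : Type*}

section CommSemiring

variable [CommSemiring k]

noncomputable def shift (a : ι → k) : (MvPolynomial ι k)[X] →ₐ[k] (MvPolynomial ι k)[X] :=
  Polynomial.aevalTower
    (MvPolynomial.aeval fun i => Polynomial.C (MvPolynomial.X i) + a i • Polynomial.X)
    Polynomial.X

@[simp]
lemma shift_X (a : ι → k) : shift a Polynomial.X = Polynomial.X :=
  Polynomial.aevalTower_X _ _

@[simp]
lemma shift_C_X (a : ι → k) (i : ι) :
    shift a (Polynomial.C (MvPolynomial.X i)) =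
      Polynomial.C (MvPolynomial.X i) + a i • Polynomial.X := by
  rw [shift, Polynomial.aevalTower_C, MvPolynomial.aeval_X]

lemma shift_comp_shift (a b : ι → k) : (shift a).comp (shift b) = shift (a + b) := by
  ext i
  · simp [add_smul, add_assoc]
  · simp

lemma shift_zero : shift (0 : ι → k) = AlgHom.id k _ := by
  ext i <;> simp

lemma coeff_zero_shift (a : ι → k) (p : (MvPolynomial ι k)[X]) :
    (shift a p).coeff 0 = p.coeff 0 := by
  let ev0 : (MvPolynomial ι k)[X] →ₐ[k] MvPolynomial ι k :=
    (Polynomial.aeval (0 : MvPolynomial ι k)).restrictScalars k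
  have : ev0.comp (shift a) = ev0 := by ext i <;> simp [ev0]
  simpa [ev0, Polynomial.coeff_zero_eq_eval_zero] using DFunLike.congr_fun this p

end CommSemiring

variable [CommRing k]

lemma X_dvd_shift_sub (a : ι → k) (p : (MvPolynomial ι k)[X]) :
    Polynomial.X ∣ shift a p - p := by
  rw [Polynomial.X_dvd_iff, Polynomial.coeff_sub, coeff_zero_shift, sub_self]

noncomputable def shiftEquiv (a : ι → k) :
    (MvPolynomial ι k)[X] ≃ₐ[k] (MvPolynomial ι k)[X] :=
  AlgEquiv.ofAlgHom (shift a) (shift (-a))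
    (by rw [shift_comp_shift, add_neg_cancel, shift_zero])
    (by rw [shift_comp_shift, neg_add_cancel, shift_zero])

end Shift

variable {k : Type} [Field k] {n : ℕ}

noncomputable def sigma (a : Fin n → k) : L k n ≃ₐ[k] L k n :=
  IsLocalization.algEquivOfAlgEquiv (M := Submonoid.powers Polynomial.X)
    (T := Submonoid.powers Polynomial.X) (L k n) (L k n) (shiftEquiv a)
    (by rw [Submonoid.map_powers]; simp [shiftEquiv])

lemma sigma_algebraMap (a : Fin n → k) (p : (MvPolynomial (Fin n) k)[X]) :
    sigma a (algebraMap _ (L k n) p) = algebraMap _ (L k n) (shift a p) :=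
  IsLocalization.algEquivOfAlgEquiv_eq _ p

lemma algebraMap_smul_X (c : k) :
    algebraMap (MvPolynomial (Fin n) k)[X] (L k n) (c • Polynomial.X) =
      t k n * algebraMap k (L k n) c := by
  rw [Algebra.smul_def, map_mul, ← IsScalarTower.algebraMap_apply, mul_comm]; rfl

lemma isSigma_sigma (a : Fin n → k) : IsSigma k n a (sigma a) := by
  refine ⟨by rw [t, sigma_algebraMap, shift_X], fun i => ?_⟩
  rw [x, sigma_algebraMap, shift_C_X, map_add, algebraMap_smul_X]

variable (k n) in
lemma isUnit_t : IsUnit (t k n) :=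
  IsLocalization.Away.algebraMap_isUnit _

lemma fDivT_mul_t (g : MvPolynomial (Fin n) k) :
    fDivT k n g * t k n = algebraMap _ (L k n) (Polynomial.C g) := by
  rw [fDivT, t, mul_assoc, mul_comm (IsLocalization.Away.invSelf _),
    IsLocalization.Away.mul_invSelf, mul_one]

namespace IsSigma

variable {a : Fin n → k} {σ : L k n ≃ₐ[k] L k n}

lemma map_algebraMap (h : IsSigma k n a σ) (p : (MvPolynomial (Fin n) k)[X]) :
    σ (algebraMap _ (L k n) p) = algebraMap _ (L k n) (shift a p) := by
  let φ := IsScalarTower.toAlgHom k (MvPolynomial (Fin n) k)[X] (L k n)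
  have : (σ : L k n →ₐ[k] L k n).comp φ = φ.comp (shift a) := by
    ext i
    · show σ (x k n i) = algebraMap _ (L k n) (shift a (Polynomial.C (MvPolynomial.X i)))
      rw [h.2 i, shift_C_X, map_add, algebraMap_smul_X]; rfl
    · show σ (t k n) = algebraMap _ (L k n) (shift a Polynomial.X)
      rw [h.1, shift_X]; rfl
  exact DFunLike.congr_fun this p

lemma unique {σ' : L k n ≃ₐ[k] L k n} (h : IsSigma k n a σ) (h' : IsSigma k n a σ') :
    σ = σ' := by
  have : (σ : L k n →+* L k n) = σ' :=
    IsLocalization.ringHom_ext (Submonoid.powers (Polynomial.X : (MvPolynomial (Fin n) k)[X]))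
      (RingHom.ext fun p => by simp [h.map_algebraMap, h'.map_algebraMap])
  exact AlgEquiv.ext (RingHom.congr_fun this)

lemma symm (h : IsSigma k n a σ) : IsSigma k n (-a) σ.symm := by
  refine ⟨σ.injective (by rw [σ.apply_symm_apply, h.1]), fun i => σ.injective ?_⟩
  rw [σ.apply_symm_apply, map_add, map_mul, h.2 i, h.1, AlgEquiv.commutes, Pi.neg_apply, map_neg]
  ring

lemma trans {b : Fin n → k} {τ : L k n ≃ₐ[k] L k n} (ha : IsSigma k n a σ)
    (hb : IsSigma k n b τ) : IsSigma k n (a + b) (τ.trans σ) := by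
  refine ⟨by rw [AlgEquiv.trans_apply, hb.1, ha.1], fun i => ?_⟩
  rw [AlgEquiv.trans_apply, hb.2 i, map_add, map_mul, ha.2 i, ha.1, AlgEquiv.commutes,
    Pi.add_apply, map_add]
  ring

lemma map_fDivT (h : IsSigma k n a σ) (g : MvPolynomial (Fin n) k) :
    ∃ q : (MvPolynomial (Fin n) k)[X],
      σ (fDivT k n g) = fDivT k n g + algebraMap _ (L k n) q := by
  obtain ⟨q, hq⟩ := X_dvd_shift_sub a (Polynomial.C g)
  refine ⟨q, (isUnit_t k n).mul_left_injective ?_⟩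
  calc σ (fDivT k n g) * t k n = σ (fDivT k n g * t k n) := by rw [map_mul, h.1]
    _ = algebraMap _ _ (Polynomial.C g + Polynomial.X * q) := by
      rw [fDivT_mul_t, h.map_algebraMap, ← hq, add_sub_cancel]
    _ = (fDivT k n g + algebraMap _ (L k n) q) * t k n := by
      rw [map_add, map_mul, ← fDivT_mul_t, t]
      ring

lemma map_mem_R {m : ℕ} {f : Fin m → MvPolynomial (Fin n) k} (h : IsSigma k n a σ) {y : L k n}
    (hy : y ∈ R k n m f) : σ y ∈ R k n m f := by
  induction hy using Algebra.adjoin_induction with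
  | mem z hz =>
    obtain ⟨j, rfl⟩ := hz
    obtain ⟨q, hq⟩ := h.map_fDivT (f j)
    rw [hq]
    exact add_mem (Algebra.subset_adjoin ⟨j, rfl⟩) ((R k n m f).algebraMap_mem q)
  | algebraMap p =>
    rw [h.map_algebraMap]
    exact (R k n m f).algebraMap_mem _
  | add _ _ _ _ hz hw => rw [map_add]; exact add_mem hz hw
  | mul _ _ _ _ hz hw => rw [map_mul]; exact mul_mem hz hw

lemma image_R {m : ℕ} {f : Fin m → MvPolynomial (Fin n) k} (h : IsSigma k n a σ) :
    σ '' (R k n m f : Set (L k n)) = R k n m f :=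
  Set.Subset.antisymm (Set.image_subset_iff.2 fun _ hy => h.map_mem_R hy)
    fun y hy => ⟨σ.symm y, h.symm.map_mem_R hy, σ.apply_symm_apply y⟩

end IsSigma

end DefToNormalCone

open DefToNormalCone in
/-- For each `a ∈ kⁿ` there is a unique `k[t,t⁻¹]`-algebra automorphism
`σ_a` of `L = k[x₁,…,xₙ][t,t⁻¹]` with `σ_a(xᵢ) = xᵢ + t·aᵢ`; moreover
(1) `σ_a(R) = R` where `R = k[x₁,…,xₙ,t][f₁/t,…,f_m/t]`, and
(2) `σ_a ∘ σ_b = σ_{a+b}`, so the additive group `kⁿ` acts on `R` by `k[t]`-algebra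
automorphisms. -/
theorem sigma_preserves_R_and_is_group_action
    (k : Type) [Field k] (n m : ℕ) (f : Fin m → MvPolynomial (Fin n) k) :
    (∀ a : Fin n → k, ∃! σ : L k n ≃ₐ[k] L k n, IsSigma k n a σ) ∧
    (∀ (a : Fin n → k) (σ : L k n ≃ₐ[k] L k n), IsSigma k n a σ →
      σ '' (R k n m f : Set (L k n)) = (R k n m f : Set (L k n))) ∧
    (∀ (a b : Fin n → k) (σ τ ρ : L k n ≃ₐ[k] L k n),
      IsSigma k n a σ → IsSigma k n b τ → IsSigma k n (a + b) ρ →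
      ∀ y : L k n, σ (τ y) = ρ y) := by
  refine ⟨fun a => ⟨sigma a, isSigma_sigma a, fun σ hσ => hσ.unique (isSigma_sigma a)⟩,
    fun a σ hσ => hσ.image_R, fun a b σ τ ρ ha hb hab y => ?_⟩
  rw [← (ha.trans hb).unique hab]
  rfl
end

section
/- Let k be a field, let A be a finite type k-algebra, let p be a maximal ideal of A, and let B → A be a k-algebra homomorphism with q the contraction of p to B. Assume the residue field extension B/q → A/p is separable. Let k' be the separable closure of k in A/p (the subfield of all elements of A/p separable over k). Then the k'-algebra homomorphism B ⊗_k k' → A/p, induced by the composite B → A → A/p and the inclusion k' ⊆ A/p, is surjective; in particular, the base change B ⊗_k k' → A ⊗_k k' admits a maximal ideal p' of A ⊗_k k' lying over p at which the induced residue field extension is an isomorphism. -/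
/-!
By Zariski's lemma `L = A/p` is finite over `k`. The image of `B ⊗_k k'` in `L` is therefore an
intermediate field `E` of `L/k`. As `E` contains the image of `B/q`, the extension `L/E` is
separable; as `E` contains the separable closure `k'`, it is purely inseparable. Hence `E = L`.
The kernel of `A ⊗_k k' → L` is then the required maximal ideal `p'`.
-/

open TensorProduct

theorem IntermediateField.eq_top_of_separableClosure_le {k L : Type*} [Field k] [Field L]
    [Algebra k L] [Algebra.IsAlgebraic k L] {E : IntermediateField k L}
    (hE : separableClosure k L ≤ E) [Algebra.IsSeparable E L] : E = ⊤ := by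
  have := (separableClosure_le_iff k L E).mp hE
  exact top_unique fun x _ ↦ by
    obtain ⟨y, rfl⟩ := IsPurelyInseparable.surjective_algebraMap_of_isSeparable E L x
    exact y.2

theorem IntermediateField.isSeparable_of_range_algebraMap_subset {k L R : Type*} [Field k]
    [Field L] [Algebra k L] [CommRing R] [Algebra R L] [Algebra.IsSeparable R L]
    {E : IntermediateField k L} (hR : Set.range (algebraMap R L) ⊆ E) :
    Algebra.IsSeparable E L := by
  let _ : Algebra R E := ((algebraMap R L).codRestrict E.toSubfield fun r ↦ hR ⟨r, rfl⟩).toAlgebra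
  have : IsScalarTower R E L := IsScalarTower.of_algebraMap_eq fun _ ↦ rfl
  exact Algebra.isSeparable_tower_top_of_isSeparable R E L

theorem Subalgebra.eq_top_of_separableClosure_le_of_range_algebraMap_subset {k L R : Type*}
    [Field k] [Field L] [Algebra k L] [Algebra.IsAlgebraic k L] [CommRing R] [Algebra R L]
    [Algebra.IsSeparable R L] {S : Subalgebra k L}
    (hS : (separableClosure k L).toSubalgebra ≤ S) (hR : Set.range (algebraMap R L) ⊆ S) :
    S = ⊤ := by
  let E := Subalgebra.IsAlgebraic.toIntermediateField (S := S)
    fun x _ ↦ Algebra.IsAlgebraic.isAlgebraic x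
  have : Algebra.IsSeparable E L :=
    IntermediateField.isSeparable_of_range_algebraMap_subset (E := E) hR
  exact congrArg IntermediateField.toSubalgebra
    (IntermediateField.eq_top_of_separableClosure_le (E := E) hS)

theorem Ideal.quotientMap_ker_bijective_of_surjective_comp {C D K : Type*} [CommRing C]
    [CommRing D] [Ring K] (φ : C →+* K) (ψ : D →+* C) (h : Function.Surjective (φ.comp ψ)) :
    Function.Bijective (Ideal.quotientMap (RingHom.ker φ) ψ le_rfl) := by
  refine ⟨Ideal.quotientMap_injective, fun y ↦ ?_⟩
  obtain ⟨c, rfl⟩ := Ideal.Quotient.mk_surjective y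
  obtain ⟨d, hd⟩ := h (φ c)
  refine ⟨Ideal.Quotient.mk _ d, ?_⟩
  rw [Ideal.quotientMap_mk, Ideal.Quotient.eq, RingHom.mem_ker, map_sub, sub_eq_zero]
  exact hd

theorem Algebra.TensorProduct.exists_isMaximal_comap_eq_ker_and_bijective_quotientMap
    {k A B E L : Type*} [Field k] [CommRing A] [CommRing B] [CommRing E] [Field L]
    [Algebra k A] [Algebra k B] [Algebra k E] [Algebra k L]
    (f : B →ₐ[k] A) (π : A →ₐ[k] L) (ι : E →ₐ[k] L)
    (h : Function.Surjective (productMap (π.comp f) ι)) :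
    ∃ p' : Ideal (A ⊗[k] E), p'.IsMaximal ∧
      p'.comap (includeLeft (R := k) (S := k) (A := A) (B := E)).toRingHom = RingHom.ker π ∧
      Function.Bijective (Ideal.quotientMap p' (map f (AlgHom.id k E)).toRingHom le_rfl) := by
  let φ := productMap π ι
  have hφf : φ.comp (map f (AlgHom.id k E)) = productMap (π.comp f) ι := by
    ext <;> simp [φ]
  rw [← hφf] at h
  refine ⟨RingHom.ker φ.toRingHom, RingHom.ker_isMaximal_of_surjective φ
    fun x ↦ let ⟨y, hy⟩ := h x; ⟨_, hy⟩, ?_,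
    Ideal.quotientMap_ker_bijective_of_surjective_comp φ.toRingHom _ h⟩
  change RingHom.ker (φ.comp includeLeft).toRingHom = _
  rw [productMap_left]
  rfl

/-- Let `k` be a field, `A` a finite type `k`-algebra, `p` a maximal ideal
of `A`, and `f : B → A` a `k`-algebra homomorphism with `q = f⁻¹(p)`. Assume the residue
field extension `B/q → A/p` is separable. Let `k'` be the separable closure of `k` in `A/p`.
Then the induced map `B ⊗_k k' → A/p` is surjective; in particular there is a maximal ideal
`p'` of `A ⊗_k k'` lying over `p` at which the residue field extension induced by
`B ⊗_k k' → A ⊗_k k'` is an isomorphism. -/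
theorem tensor_separableClosure_surjective
    (k : Type*) [Field k] (A B : Type*) [CommRing A] [CommRing B]
    [Algebra k A] [Algebra k B] [Algebra.FiniteType k A]
    (f : B →ₐ[k] A) (p : Ideal A) [p.IsMaximal]
    (hsep : @Algebra.IsSeparable (B ⧸ p.comap f.toRingHom) (A ⧸ p) _ _
      (Ideal.quotientMap p f.toRingHom le_rfl).toAlgebra) :
    letI : Field (A ⧸ p) := Ideal.Quotient.field p
    letI k' : IntermediateField k (A ⧸ p) := separableClosure k (A ⧸ p)
    Function.Surjective
      (Algebra.TensorProduct.productMap ((Ideal.Quotient.mkₐ k p).comp f) k'.val) ∧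
    ∃ p' : Ideal (A ⊗[k] k'), p'.IsMaximal ∧
      p'.comap (Algebra.TensorProduct.includeLeft (R := k) (S := k) (A := A) (B := k')).toRingHom = p ∧
      Function.Bijective
        (Ideal.quotientMap p'
          (Algebra.TensorProduct.map f (AlgHom.id k k')).toRingHom le_rfl) := by
  let _ : Field (A ⧸ p) := Ideal.Quotient.field p
  let _ := (Ideal.quotientMap p f.toRingHom le_rfl).toAlgebra
  let g := (Ideal.Quotient.mkₐ k p).comp f
  have : Module.Finite k (A ⧸ p) := finite_of_finite_type_of_isJacobsonRing k (A ⧸ p)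
  have hsurj : Function.Surjective
      (Algebra.TensorProduct.productMap g (separableClosure k (A ⧸ p)).val) := by
    rw [← AlgHom.range_eq_top, Algebra.TensorProduct.productMap_range]
    refine Subalgebra.eq_top_of_separableClosure_le_of_range_algebraMap_subset
      (R := B ⧸ p.comap f.toRingHom) ?_ ?_
    · rw [IntermediateField.range_val]
      exact le_sup_right
    · rintro _ ⟨x, rfl⟩
      obtain ⟨b, rfl⟩ := Ideal.Quotient.mk_surjective x
      exact le_sup_left (a := g.range) ⟨b, rfl⟩
  obtain ⟨p', hmax, hcomap, hbij⟩ :=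
    Algebra.TensorProduct.exists_isMaximal_comap_eq_ker_and_bijective_quotientMap _ _ _ hsurj
  exact ⟨hsurj, p', hmax, hcomap.trans (Ideal.Quotient.mkₐ_ker k p), hbij⟩
end
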